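/- If the Euler arctangent series arctan(r) = (r/(1+r²)) Σ_{k=0}^∞ ((2k)!!/(2k+1)!!)(r²/(1+r²))^k is truncated after the n-th term (n ≥ -1), then the remainder R_n = (r/(1+r²)) Σ_{k=n+1}^∞ ((2k)!!/(2k+1)!!)(r²/(1+r²))^k has the same sign as r and satisfies B_n ≤ |R_n| ≤ (1+r²) B_n, where B_n = ((2n+2)!!/(2n+3)!!) · (|r|/(1+r²)) · (r²/(1+r²))^{n+1}. -/

import Mathlib

/-!
The coefficients `(2k)!!/(2k+1)!!` decrease (consecutive ratio `(2k+2)/(2k+3)`), so the tail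
`∑_{k ≥ m} c_k x^k` with `x = r²/(1+r²)` lies between its first term `c_m x^m` and
`c_m x^m / (1 - x) = (1 + r²) c_m x^m`. The tail is nonnegative, so the remainder has the sign of `r`.
-/

open Real

/-- (2k)!! = 2^k k! -/
noncomputable def evenDF (k : ℕ) : ℝ := 2 ^ k * k.factorial

/-- (2k+1)!! = (2k+1)!/(2^k k!) -/
noncomputable def oddDF (k : ℕ) : ℝ := (2 * k + 1).factorial / (2 ^ k * k.factorial)

lemma evenDF_pos (k : ℕ) : 0 < evenDF k := by
  unfold evenDF
  positivity

lemma oddDF_pos (k : ℕ) : 0 < oddDF k := by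
  unfold oddDF
  positivity

lemma evenDF_succ (k : ℕ) : evenDF (k + 1) = (2 * k + 2) * evenDF k := by
  simp only [evenDF, Nat.factorial_succ]
  push_cast
  ring

lemma oddDF_succ (k : ℕ) : oddDF (k + 1) = (2 * k + 3) * oddDF k := by
  have hfac : ((2 * (k + 1) + 1).factorial : ℝ) = (2 * k + 3) * (2 * k + 2) * (2 * k + 1).factorial := by
    rw [show 2 * (k + 1) + 1 = 2 * k + 1 + 1 + 1 by ring, Nat.factorial_succ, Nat.factorial_succ]
    push_cast
    ring
  rw [oddDF, oddDF, hfac, Nat.factorial_succ k]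
  push_cast
  field_simp
  ring

lemma antitone_evenDF_div_oddDF : Antitone fun k => evenDF k / oddDF k := by
  refine antitone_nat_of_succ_le fun k => ?_
  rw [evenDF_succ, oddDF_succ, mul_div_mul_comm]
  refine mul_le_of_le_one_left (div_pos (evenDF_pos k) (oddDF_pos k)).le ?_
  rw [div_le_one (by positivity)]
  linarith

lemma mul_pow_add_le_of_antitone {c : ℕ → ℝ} (hc : Antitone c) {x : ℝ} (hx0 : 0 ≤ x)
    (m k : ℕ) : c (k + m) * x ^ (k + m) ≤ c m * x ^ m * x ^ k := by
  rw [mul_assoc, ← pow_add, add_comm m]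
  exact mul_le_mul_of_nonneg_right (hc (Nat.le_add_left m k)) (pow_nonneg hx0 _)

lemma summable_mul_pow_add_of_antitone {c : ℕ → ℝ} (hc : Antitone c) (hc0 : ∀ k, 0 ≤ c k)
    {x : ℝ} (hx0 : 0 ≤ x) (hx1 : x < 1) (m : ℕ) :
    Summable fun k => c (k + m) * x ^ (k + m) :=
  .of_nonneg_of_le (fun _ => mul_nonneg (hc0 _) (pow_nonneg hx0 _))
    (mul_pow_add_le_of_antitone hc hx0 m) ((summable_geometric_of_lt_one hx0 hx1).mul_left _)

lemma le_tsum_mul_pow_add_of_antitone {c : ℕ → ℝ} (hc : Antitone c) (hc0 : ∀ k, 0 ≤ c k)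
    {x : ℝ} (hx0 : 0 ≤ x) (hx1 : x < 1) (m : ℕ) :
    c m * x ^ m ≤ ∑' k, c (k + m) * x ^ (k + m) := by
  simpa using (summable_mul_pow_add_of_antitone hc hc0 hx0 hx1 m).le_tsum 0
    fun _ _ => mul_nonneg (hc0 _) (pow_nonneg hx0 _)

lemma tsum_mul_pow_add_le_of_antitone {c : ℕ → ℝ} (hc : Antitone c) (hc0 : ∀ k, 0 ≤ c k)
    {x : ℝ} (hx0 : 0 ≤ x) (hx1 : x < 1) (m : ℕ) :
    ∑' k, c (k + m) * x ^ (k + m) ≤ c m * x ^ m * (1 - x)⁻¹ := by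
  have hgeom := summable_geometric_of_lt_one hx0 hx1
  calc ∑' k, c (k + m) * x ^ (k + m) ≤ ∑' k, c m * x ^ m * x ^ k :=
        (summable_mul_pow_add_of_antitone hc hc0 hx0 hx1 m).tsum_le_tsum
          (mul_pow_add_le_of_antitone hc hx0 m) (hgeom.mul_left _)
    _ = c m * x ^ m * (1 - x)⁻¹ := by rw [tsum_mul_left, tsum_geometric_of_lt_one hx0 hx1]

lemma one_sub_sq_div_one_add_sq (r : ℝ) : 1 - r ^ 2 / (1 + r ^ 2) = (1 + r ^ 2)⁻¹ := by
  field_simp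
  ring

theorem euler_arctan_remainder (r : ℝ) (m : ℕ) :
    (0 ≤ r → 0 ≤ (r / (1 + r ^ 2)) *
        ∑' k : ℕ, (evenDF (k + m) / oddDF (k + m)) * (r ^ 2 / (1 + r ^ 2)) ^ (k + m)) ∧
    (r ≤ 0 → (r / (1 + r ^ 2)) *
        ∑' k : ℕ, (evenDF (k + m) / oddDF (k + m)) * (r ^ 2 / (1 + r ^ 2)) ^ (k + m) ≤ 0) ∧
    (evenDF m / oddDF m) * (|r| / (1 + r ^ 2)) * (r ^ 2 / (1 + r ^ 2)) ^ m ≤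
      |(r / (1 + r ^ 2)) *
        ∑' k : ℕ, (evenDF (k + m) / oddDF (k + m)) * (r ^ 2 / (1 + r ^ 2)) ^ (k + m)| ∧
    |(r / (1 + r ^ 2)) *
        ∑' k : ℕ, (evenDF (k + m) / oddDF (k + m)) * (r ^ 2 / (1 + r ^ 2)) ^ (k + m)| ≤
      (1 + r ^ 2) * ((evenDF m / oddDF m) * (|r| / (1 + r ^ 2)) * (r ^ 2 / (1 + r ^ 2)) ^ m) := by
  have hs : 0 < 1 + r ^ 2 := by positivity
  have hx0 : 0 ≤ r ^ 2 / (1 + r ^ 2) := by positivity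
  have hx1 : r ^ 2 / (1 + r ^ 2) < 1 := (div_lt_one hs).2 (by linarith)
  have hc0 : ∀ k, 0 ≤ evenDF k / oddDF k := fun k => (div_pos (evenDF_pos k) (oddDF_pos k)).le
  have hlow := le_tsum_mul_pow_add_of_antitone antitone_evenDF_div_oddDF hc0 hx0 hx1 m
  have hup := tsum_mul_pow_add_le_of_antitone antitone_evenDF_div_oddDF hc0 hx0 hx1 m
  rw [one_sub_sq_div_one_add_sq, inv_inv] at hup
  set T := ∑' k : ℕ, (evenDF (k + m) / oddDF (k + m)) * (r ^ 2 / (1 + r ^ 2)) ^ (k + m)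
  have hT : 0 ≤ T := le_trans (mul_nonneg (hc0 m) (pow_nonneg hx0 m)) hlow
  have habs : |r / (1 + r ^ 2) * T| = |r| / (1 + r ^ 2) * T := by
    rw [abs_mul, abs_div, abs_of_pos hs, abs_of_nonneg hT]
  have hrs : 0 ≤ |r| / (1 + r ^ 2) := by positivity
  refine ⟨fun hr => mul_nonneg (div_nonneg hr hs.le) hT,
    fun hr => mul_nonpos_of_nonpos_of_nonneg (div_nonpos_of_nonpos_of_nonneg hr hs.le) hT, ?_, ?_⟩
  · rw [habs]
    linarith [mul_le_mul_of_nonneg_left hlow hrs]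
  · rw [habs]
    linarith [mul_le_mul_of_nonneg_left hup hrs]
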